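/- arXiv:2106.13614 — 3 statements merged into one kernel-verified Lean document; each statement's English description precedes it below -/
import Mathlib

section
/- If X is a 2D random vector with independent components X₁ ~ N(v₁, σ²) and X₂ ~ N(v₂, σ²), then |X| follows a Rice distribution with parameters v = √(v₁² + v₂²) and σ, i.e., |X| has density p(x) = (x/σ²)·exp(−(x² + v²)/(2σ²))·I₀(xv/σ²) for x ≥ 0, where I₀ is the modified Bessel function of the first kind of order zero. -/
/-!
With `m = v (cos α, sin α)` the mean of `(X₁, X₂)`, the Gaussian density at
`r (cos θ, sin θ)` is `(2πσ²)⁻¹ exp(-(r² + v²)/(2σ²)) exp((rv/σ²) cos(θ - α))`, so in polar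
coordinates the radial density is `r (2πσ²)⁻¹ exp(-(r² + v²)/(2σ²)) ∫₋π^π exp(a cos(θ - α)) dθ`
with `a = rv/σ²`. The angular integral is `2π I₀(a)`: expanding the exponential and integrating
term by term, odd powers of the sine vanish over a period and even ones give Wallis' integrals
`∫₀^{2π} sin^{2k} = 2π (2k)! / (4^k (k!)²)`.
-/

open MeasureTheory ProbabilityTheory

noncomputable def besselI0 (z : ℝ) : ℝ :=
  ∑' k : ℕ, (z / 2) ^ (2 * k) / ((Nat.factorial k : ℝ)) ^ 2

open Real Set
open scoped Nat ENNReal NNReal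

lemma hasSum_besselI0 (a : ℝ) :
    HasSum (fun k : ℕ => (a / 2) ^ (2 * k) / (k ! : ℝ) ^ 2) (besselI0 a) := by
  refine Summable.hasSum (.of_nonneg_of_le (fun k => by rw [pow_mul]; positivity) (fun k => ?_)
    (summable_pow_div_factorial ((a / 2) ^ 2)))
  have hk : (1 : ℝ) ≤ k ! := mod_cast k.factorial_pos
  rw [pow_mul]
  gcongr
  nlinarith

lemma prod_range_two_mul_add_one_div_eq_factorial (n : ℕ) :
    ∏ i ∈ Finset.range n, (2 * (i : ℝ) + 1) / (2 * i + 2) =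
      (2 * n)! / (4 ^ n * (n ! : ℝ) ^ 2) := by
  induction n with
  | zero => simp
  | succ k ih =>
    rw [Finset.prod_range_succ, ih, show 2 * (k + 1) = 2 * k + 1 + 1 by ring,
      Nat.factorial_succ, Nat.factorial_succ, Nat.factorial_succ]
    push_cast
    field_simp
    ring

lemma integral_sin_pow_zero_two_pi (n : ℕ) :
    ∫ x in 0..2 * π, sin x ^ n = (1 + (-1) ^ n) * ∫ x in 0..π, sin x ^ n := by
  have hint : ∀ a b, IntervalIntegrable (fun x => sin x ^ n) volume a b :=
    fun _ _ => (continuous_sin.pow n).intervalIntegrable _ _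
  have hshift : ∫ x in π..2 * π, sin x ^ n = (-1) ^ n * ∫ x in 0..π, sin x ^ n := by
    simp_rw [← intervalIntegral.integral_const_mul, ← mul_pow, neg_one_mul, ← sin_add_pi]
    rw [intervalIntegral.integral_comp_add_right (fun x => sin x ^ n), zero_add, two_mul]
  rw [← intervalIntegral.integral_add_adjacent_intervals (hint 0 π) (hint π (2 * π)), hshift]
  ring

lemma integral_sin_pow_even_eq_factorial (k : ℕ) :
    ∫ x in 0..π, sin x ^ (2 * k) = π * (2 * k)! / (4 ^ k * (k ! : ℝ) ^ 2) := by
  rw [integral_sin_pow_even, prod_range_two_mul_add_one_div_eq_factorial, mul_div_assoc]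

lemma integral_exp_mul_sin_zero_two_pi (a : ℝ) :
    ∫ x in 0..2 * π, exp (a * sin x) = 2 * π * besselI0 a := by
  have hexp : HasSum (fun n => ∫ x in 0..2 * π, (a * sin x) ^ n / n !)
      (∫ x in 0..2 * π, exp (a * sin x)) := by
    refine intervalIntegral.hasSum_integral_of_dominated_convergence (fun n _ => |a| ^ n / n !)
      (fun n => by fun_prop) (fun n => .of_forall fun x _ => ?_)
      (.of_forall fun _ _ => summable_pow_div_factorial |a|) intervalIntegrable_const
      (.of_forall fun x _ => ?_)
    · rw [norm_div, norm_pow, norm_mul, Real.norm_natCast]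
      gcongr
      exact mul_le_of_le_one_right (abs_nonneg a) (abs_sin_le_one x)
    · rw [Real.exp_eq_exp_ℝ]
      exact NormedSpace.expSeries_div_hasSum_exp (a * sin x)
  have hterm : ∀ n, ∫ x in 0..2 * π, (a * sin x) ^ n / n ! =
      a ^ n / n ! * ((1 + (-1) ^ n) * ∫ x in 0..π, sin x ^ n) := by
    intro n
    simp_rw [mul_pow, intervalIntegral.integral_div, intervalIntegral.integral_const_mul,
      integral_sin_pow_zero_two_pi]
    ring
  have hbessel : HasSum (fun n => ∫ x in 0..2 * π, (a * sin x) ^ n / n !)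
      (2 * π * besselI0 a + 0) := by
    refine .even_add_odd ?_ ?_
    · have heven : ∀ k, ∫ x in 0..2 * π, (a * sin x) ^ (2 * k) / (2 * k)! =
          2 * π * ((a / 2) ^ (2 * k) / (k ! : ℝ) ^ 2) := fun k => by
        rw [hterm, integral_sin_pow_even_eq_factorial, div_pow, pow_mul (-1 : ℝ),
          pow_mul (2 : ℝ)]
        field_simp
        norm_num
        ring
      simpa only [heven] using (hasSum_besselI0 a).mul_left (2 * π)
    · have hodd : ∀ k, ∫ x in 0..2 * π, (a * sin x) ^ (2 * k + 1) / (2 * k + 1)! = 0 :=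
        fun k => by rw [hterm, pow_succ (-1 : ℝ), pow_mul (-1 : ℝ)]; norm_num
      simpa only [hodd] using hasSum_zero
  rw [hexp.unique hbessel, add_zero]

lemma integral_exp_mul_cos_sub (a α : ℝ) :
    ∫ θ in (-π)..π, exp (a * cos (θ - α)) = 2 * π * besselI0 a := by
  have hper : Function.Periodic (fun x => exp (a * sin x)) (2 * π) := fun x => by
    simp only [sin_add_two_pi]
  simp_rw [← sin_add_pi_div_two, sub_add_eq_add_sub, add_sub_assoc]
  rw [intervalIntegral.integral_comp_add_right (fun x => exp (a * sin x)),
    show π + (π / 2 - α) = -π + (π / 2 - α) + 2 * π by ring,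
    hper.intervalIntegral_add_eq _ 0, zero_add, integral_exp_mul_sin_zero_two_pi]

lemma map_sqrt_sq_add_sq_withDensity {f : ℝ × ℝ → ℝ≥0∞} (hf : Measurable f) :
    (volume.withDensity f).map (fun p => √(p.1 ^ 2 + p.2 ^ 2)) =
      volume.withDensity ((Ioi 0).indicator fun r =>
        ENNReal.ofReal r * ∫⁻ θ in Ioo (-π) π, f (r * cos θ, r * sin θ)) := by
  have hg : Measurable fun p : ℝ × ℝ => √(p.1 ^ 2 + p.2 ^ 2) := by fun_prop
  have hpolar (r θ : ℝ) : √((r * cos θ) ^ 2 + (r * sin θ) ^ 2) = |r| := by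
    rw [mul_pow, mul_pow, ← mul_add, cos_sq_add_sin_sq, mul_one, sqrt_sq_eq_abs]
  ext s hs
  have hmeas : Measurable fun p : ℝ × ℝ => ENNReal.ofReal p.1 •
      ((fun p : ℝ × ℝ => √(p.1 ^ 2 + p.2 ^ 2)) ⁻¹' s).indicator f (polarCoord.symm p) :=
    measurable_fst.ennreal_ofReal.smul
      ((hf.indicator (hg hs)).comp continuous_polarCoord_symm.measurable)
  rw [Measure.map_apply hg hs, withDensity_apply _ (hg hs), withDensity_apply _ hs,
    ← lintegral_indicator (hg hs), ← lintegral_comp_polarCoord_symm, polarCoord_target,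
    Measure.volume_eq_prod, ← Measure.prod_restrict, lintegral_prod _ hmeas.aemeasurable,
    ← lintegral_indicator hs, ← lintegral_indicator measurableSet_Ioi]
  refine lintegral_congr fun r => ?_
  rcases le_or_gt r 0 with hr | hr
  · have hr' : r ∉ Ioi 0 := notMem_Ioi.mpr hr
    rw [indicator_of_notMem hr', eq_comm, indicator_apply_eq_zero]
    exact fun _ => indicator_of_notMem hr' _
  have hpre (θ : ℝ) :
      (r * cos θ, r * sin θ) ∈ (fun p => √(p.1 ^ 2 + p.2 ^ 2)) ⁻¹' s ↔ r ∈ s := by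
    rw [mem_preimage, hpolar, abs_of_pos hr]
  by_cases hrs : r ∈ s
  · simp [hr, hrs, hpre, lintegral_const_mul' _ _ ENNReal.ofReal_ne_top]
  · simp [hr, hrs, hpre]

lemma gaussianPDFReal_mul_polar (w : ℝ≥0) (v α r θ : ℝ) :
    gaussianPDFReal (v * cos α) w (r * cos θ) * gaussianPDFReal (v * sin α) w (r * sin θ) =
      (2 * π * w)⁻¹ * exp (-(r ^ 2 + v ^ 2) / (2 * w)) * exp (r * v / w * cos (θ - α)) := by
  have hexp : -(r * cos θ - v * cos α) ^ 2 / (2 * w) + -(r * sin θ - v * sin α) ^ 2 / (2 * w) =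
      -(r ^ 2 + v ^ 2) / (2 * w) + r * v / w * cos (θ - α) := by
    have hsq : (r * cos θ - v * cos α) ^ 2 + (r * sin θ - v * sin α) ^ 2 =
        r ^ 2 + v ^ 2 - 2 * r * v * cos (θ - α) := by
      rw [cos_sub]
      linear_combination r ^ 2 * cos_sq_add_sin_sq θ + v ^ 2 * cos_sq_add_sin_sq α
    rw [← add_div, ← neg_add, hsq]
    ring
  rw [gaussianPDFReal, gaussianPDFReal, mul_mul_mul_comm, ← mul_inv, ← exp_add, hexp, exp_add,
    mul_self_sqrt (by positivity)]
  ring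

lemma lintegral_gaussianPDF_mul_polar (w : ℝ≥0) (v α r : ℝ) :
    ∫⁻ θ in Ioo (-π) π,
        gaussianPDF (v * cos α) w (r * cos θ) * gaussianPDF (v * sin α) w (r * sin θ) =
      ENNReal.ofReal ((w : ℝ)⁻¹ * exp (-(r ^ 2 + v ^ 2) / (2 * w)) * besselI0 (r * v / w)) := by
  have hcont : Continuous fun θ => exp (r * v / w * cos (θ - α)) := by fun_prop
  have hC : 0 ≤ (2 * π * w)⁻¹ * exp (-(r ^ 2 + v ^ 2) / (2 * w)) := by positivity
  simp_rw [gaussianPDF, ← ENNReal.ofReal_mul (gaussianPDFReal_nonneg _ _ _),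
    gaussianPDFReal_mul_polar, ENNReal.ofReal_mul hC]
  rw [lintegral_const_mul' _ _ ENNReal.ofReal_ne_top, ← ofReal_integral_eq_lintegral_ofReal
    (hcont.integrableOn_Icc.mono_set Ioo_subset_Icc_self) (.of_forall fun _ => (exp_pos _).le),
    ← integral_Ioc_eq_integral_Ioo, ← intervalIntegral.integral_of_le (by linarith [pi_pos]),
    integral_exp_mul_cos_sub, ← ENNReal.ofReal_mul (by positivity)]
  congr 1
  rcases eq_or_ne (w : ℝ) 0 with hw | hw
  · simp [hw]
  · field_simp

noncomputable def ricePDFReal (v σ x : ℝ) : ℝ :=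
  if 0 ≤ x then x / σ ^ 2 * exp (-(x ^ 2 + v ^ 2) / (2 * σ ^ 2)) * besselI0 (x * v / σ ^ 2)
  else 0

lemma ricePDFReal_of_nonpos (v σ : ℝ) {x : ℝ} (hx : x ≤ 0) : ricePDFReal v σ x = 0 := by
  rcases hx.lt_or_eq with hx | rfl
  · exact if_neg hx.not_ge
  · simp [ricePDFReal]

theorem map_sqrt_sq_add_sq_gaussianReal_prod {σ : ℝ} (hσ : σ ≠ 0) (v α : ℝ) :
    ((gaussianReal (v * cos α) (σ ^ 2).toNNReal).prod
        (gaussianReal (v * sin α) (σ ^ 2).toNNReal)).map (fun p => √(p.1 ^ 2 + p.2 ^ 2)) =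
      volume.withDensity fun x => ENNReal.ofReal (ricePDFReal v σ x) := by
  have hw : ((σ ^ 2).toNNReal : ℝ) = σ ^ 2 := Real.coe_toNNReal _ (sq_nonneg σ)
  have hw0 : (σ ^ 2).toNNReal ≠ 0 := by
    rw [Ne, Real.toNNReal_eq_zero, not_le]
    positivity
  rw [gaussianReal_of_var_ne_zero _ hw0, gaussianReal_of_var_ne_zero _ hw0,
    prod_withDensity (measurable_gaussianPDF _ _) (measurable_gaussianPDF _ _),
    ← Measure.volume_eq_prod, map_sqrt_sq_add_sq_withDensity (by fun_prop)]
  congr 1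
  ext x
  rcases le_or_gt x 0 with hx | hx
  · rw [indicator_of_notMem (notMem_Ioi.mpr hx), ricePDFReal_of_nonpos _ _ hx, ENNReal.ofReal_zero]
  · rw [indicator_of_mem (mem_Ioi.mpr hx), lintegral_gaussianPDF_mul_polar,
      ← ENNReal.ofReal_mul hx.le, ricePDFReal, if_pos hx.le, hw]
    congr 1
    ring

theorem norm_of_gaussian_pair_rice_general
    {Ω : Type*} [MeasurableSpace Ω] (P : Measure Ω)
    (σ v₁ v₂ : ℝ) (hσ : 0 < σ) (X₁ X₂ : Ω → ℝ)
    (hm₁ : Measurable X₁) (hm₂ : Measurable X₂)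
    (h₁ : Measure.map X₁ P = gaussianReal v₁ (Real.toNNReal (σ ^ 2)))
    (h₂ : Measure.map X₂ P = gaussianReal v₂ (Real.toNNReal (σ ^ 2)))
    (hindep : IndepFun X₁ X₂ P) :
    Measure.map (fun ω => Real.sqrt (X₁ ω ^ 2 + X₂ ω ^ 2)) P =
      volume.withDensity (fun x => ENNReal.ofReal
        (if 0 ≤ x then
          x / σ ^ 2 * Real.exp (-(x ^ 2 + (Real.sqrt (v₁ ^ 2 + v₂ ^ 2)) ^ 2) / (2 * σ ^ 2)) *
            besselI0 (x * Real.sqrt (v₁ ^ 2 + v₂ ^ 2) / σ ^ 2)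
         else 0)) := by
  have hpair : P.map (fun ω => (X₁ ω, X₂ ω)) =
      (gaussianReal v₁ (σ ^ 2).toNNReal).prod (gaussianReal v₂ (σ ^ 2).toNNReal) := by
    rw [← h₁, ← h₂]
    exact (indepFun_iff_map_prod_eq_prod_map_map' hm₁.aemeasurable hm₂.aemeasurable
      (by rw [h₁]; infer_instance) (by rw [h₂]; infer_instance)).mp hindep
  let z : ℂ := ⟨v₁, v₂⟩
  have hz : ‖z‖ = √(v₁ ^ 2 + v₂ ^ 2) := by
    rw [Complex.norm_def, Complex.normSq_mk, sq, sq]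
  have hrice := map_sqrt_sq_add_sq_gaussianReal_prod hσ.ne' ‖z‖ (Complex.arg z)
  rwa [Complex.norm_mul_cos_arg, Complex.norm_mul_sin_arg, hz, ← hpair,
    Measure.map_map (by fun_prop) (hm₁.prodMk hm₂)] at hrice

/-- If `X = (X₁, X₂)` has independent components `X₁ ~ N(v₁, σ²)` and `X₂ ~ N(v₂, σ²)`,
then `|X| = √(X₁² + X₂²)` follows a Rice distribution with parameters `v = √(v₁² + v₂²)`
and `σ`, i.e. its law has density `p(x) = (x/σ²)·exp(−(x² + v²)/(2σ²))·I₀(xv/σ²)`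
for `x ≥ 0` (and `0` otherwise) with respect to Lebesgue measure. -/
theorem norm_of_gaussian_pair_rice
    {Ω : Type*} [MeasurableSpace Ω] (P : Measure Ω) [IsProbabilityMeasure P]
    (σ v₁ v₂ : ℝ) (hσ : 0 < σ) (X₁ X₂ : Ω → ℝ)
    (hm₁ : Measurable X₁) (hm₂ : Measurable X₂)
    (h₁ : Measure.map X₁ P = gaussianReal v₁ (Real.toNNReal (σ ^ 2)))
    (h₂ : Measure.map X₂ P = gaussianReal v₂ (Real.toNNReal (σ ^ 2)))
    (hindep : IndepFun X₁ X₂ P) :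
    Measure.map (fun ω => Real.sqrt (X₁ ω ^ 2 + X₂ ω ^ 2)) P =
      volume.withDensity (fun x => ENNReal.ofReal
        (if 0 ≤ x then
          x / σ ^ 2 * Real.exp (-(x ^ 2 + (Real.sqrt (v₁ ^ 2 + v₂ ^ 2)) ^ 2) / (2 * σ ^ 2)) *
            besselI0 (x * Real.sqrt (v₁ ^ 2 + v₂ ^ 2) / σ ^ 2)
         else 0)) :=
  norm_of_gaussian_pair_rice_general P σ v₁ v₂ hσ X₁ X₂ hm₁ hm₂ h₁ h₂ hindep
end

section
/- Let u > v > 0, α > 0, β > 1, and γ > α. Define f(σ) = (u/σ + α − γ)^β − (v/σ)^β − α^β for σ > 0. Then f((u−v)/γ) > 0 and f((u−v)/(γ−α)) = −α^β < 0. -/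
/-! At `σ = (u - v) / c` one has `u / σ = v / σ + c`. For `c = γ` the first term of `f` becomes
`(v / σ + α) ^ β`, which exceeds `(v / σ) ^ β + α ^ β` because `t ↦ t ^ β` is strictly
superadditive on positive reals for `β > 1`; for `c = γ - α` the first two terms cancel. -/

theorem Real.add_rpow_lt_rpow_add {p a b : ℝ} (ha : 0 < a) (hb : 0 < b) (hp : 1 < p) :
    a ^ p + b ^ p < (a + b) ^ p := by
  have peel {x : ℝ} (hx : 0 < x) : x ^ p = x * x ^ (p - 1) := by
    rw [← Real.rpow_one_add' hx.le (by linarith), add_sub_cancel]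
  have hab : 0 < a + b := add_pos ha hb
  calc a ^ p + b ^ p = a * a ^ (p - 1) + b * b ^ (p - 1) := by rw [peel ha, peel hb]
    _ < a * (a + b) ^ (p - 1) + b * (a + b) ^ (p - 1) := by gcongr <;> linarith
    _ = (a + b) ^ p := by rw [peel hab]; ring

/-- For `u > v > 0`, `α > 0`, `β > 1`, `γ > α`, the function
`f(σ) = (u/σ + α − γ)^β − (v/σ)^β − α^β` satisfies `f((u−v)/γ) > 0` and
`f((u−v)/(γ−α)) = −α^β < 0`. -/
theorem f_sign_at_endpoints (u v α β γ : ℝ) (hv : 0 < v) (huv : v < u)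
    (hα : 0 < α) (hβ : 1 < β) (hγ : α < γ) :
    (0 < (u / ((u - v) / γ) + α - γ) ^ β - (v / ((u - v) / γ)) ^ β - α ^ β) ∧
    ((u / ((u - v) / (γ - α)) + α - γ) ^ β - (v / ((u - v) / (γ - α))) ^ β - α ^ β
        = -α ^ β) ∧
    (-α ^ β < 0) := by
  have hvu : 0 < u - v := sub_pos.2 huv
  have shift (c : ℝ) : u / ((u - v) / c) = v / ((u - v) / c) + c := by
    rw [← sub_eq_iff_eq_add', ← sub_div, div_div_cancel₀ hvu.ne']
  refine ⟨?_, ?_, neg_neg_of_pos (Real.rpow_pos_of_pos hα β)⟩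
  · have hsv : 0 < v / ((u - v) / γ) := by have := hα.trans hγ; positivity
    have := Real.add_rpow_lt_rpow_add hsv hα hβ
    rw [shift, add_sub_assoc, add_add_sub_cancel]
    linarith
  · rw [shift, add_sub_assoc, ← neg_sub γ α, add_neg_cancel_right, sub_self, zero_sub]
end

section
/- Let u > v > 0, α > 0, β > 1, γ > α, and set σ_max = (u−v)/(γ−α). Define f(σ) = (u/σ + α − γ)^β − (v/σ)^β − α^β. Then f is strictly decreasing on the interval (0, σ_max); consequently f has a unique zero in ((u−v)/γ, σ_max). -/
/-!
Write the base as `u / σ + α - γ = v / σ + d σ` with `d σ = (u - v) / σ - (γ - α)`, which is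
positive exactly for `σ < σ_max`. Both `v / σ` and `d σ` decrease in `σ`, and
`(x + d) ^ β - x ^ β` increases in `d` (monotonicity of `rpow`) and in `x ≥ 0` (strict convexity
of `x ^ β`), so `f` is strictly decreasing. At `σ = (u - v) / γ` the base is `v / σ + α`, so
`f > 0` by strict superadditivity of `x ^ β`; at `σ_max` the base is `v / σ`, so `f = -α ^ β < 0`.
The intermediate value theorem and strict monotonicity give the unique zero.
-/

open Real Set

theorem StrictConvexOn.add_sub_lt_add_sub {𝕜 : Type*} [Field 𝕜] [LinearOrder 𝕜]
    [IsStrictOrderedRing 𝕜] {s : Set 𝕜} {f : 𝕜 → 𝕜} (hf : StrictConvexOn 𝕜 s f) {x y d : 𝕜}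
    (hx : x ∈ s) (hy : y + d ∈ s) (hxy : x < y) (hd : 0 < d) :
    f (x + d) - f x < f (y + d) - f y := by
  -- `y` and `x + d` split `[x, y + d]` in the ratios `(y - x) : d` and `d : (y - x)`.
  have hy' := hf.secant_strict_mono_aux1 hx hy hxy (lt_add_of_pos_right y hd)
  have hxd := hf.secant_strict_mono_aux1 hx hy (lt_add_of_pos_right x hd) (by linarith)
  have hL : 0 < y + d - x := by linarith
  nlinarith

theorem rpow_add_sub_rpow_lt {x y d β : ℝ} (hx : 0 ≤ x) (hxy : x < y) (hd : 0 < d)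
    (hβ : 1 < β) : (x + d) ^ β - x ^ β < (y + d) ^ β - y ^ β :=
  (strictConvexOn_rpow hβ).add_sub_lt_add_sub hx (by simp only [mem_Ici]; linarith) hxy hd

theorem rpow_add_rpow_lt_rpow_add {x y β : ℝ} (hx : 0 < x) (hy : 0 < y) (hβ : 1 < β) :
    x ^ β + y ^ β < (x + y) ^ β := by
  have h := rpow_add_sub_rpow_lt le_rfl hx hy hβ
  rw [zero_add, zero_rpow (by positivity), sub_zero] at h
  linarith

theorem StrictAntiOn.existsUnique_zero {f : ℝ → ℝ} {s : Set ℝ} {a b : ℝ}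
    (hf : StrictAntiOn f s) (hab : a ≤ b) (hs : Ioo a b ⊆ s) (hc : ContinuousOn f (Icc a b))
    (ha : 0 < f a) (hb : f b < 0) : ∃! x, x ∈ Ioo a b ∧ f x = 0 := by
  obtain ⟨x, hx, hfx⟩ := intermediate_value_Ioo' hab hc ⟨hb, ha⟩
  exact ⟨x, ⟨hx, hfx⟩, fun y ⟨hy, hfy⟩ => hf.injOn (hs hy) (hs hx) (hfy.trans hfx.symm)⟩

noncomputable def rpowGap (u v α β γ σ : ℝ) : ℝ :=
  (u / σ + α - γ) ^ β - (v / σ) ^ β - α ^ β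

section

variable {u v α β γ : ℝ}

theorem rpowGap_strictAntiOn (hv : 0 < v) (huv : v < u) (hβ : 1 < β) (hγ : α < γ) :
    StrictAntiOn (rpowGap u v α β γ) (Ioo 0 ((u - v) / (γ - α))) := by
  rintro σ₁ ⟨hσ₁, -⟩ σ₂ ⟨hσ₂, hσ₂b⟩ h12
  set d : ℝ → ℝ := fun σ => (u - v) / σ - (γ - α)
  have hsplit : ∀ σ, u / σ + α - γ = v / σ + d σ := fun σ => by simp only [d]; ring
  have hd₂ : 0 < d σ₂ := by
    simp only [d, sub_pos]; rwa [lt_div_iff₀ hσ₂, ← lt_div_iff₀' (by linarith)]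
  have hd : d σ₂ < d σ₁ := by
    simp only [d, sub_lt_sub_iff_right]; exact div_lt_div_of_pos_left (by linarith) hσ₁ h12
  have hvσ : v / σ₂ < v / σ₁ := div_lt_div_of_pos_left hv hσ₁ h12
  have hvσ₀ : 0 ≤ v / σ₂ := by positivity
  simp only [rpowGap, hsplit]
  calc (v / σ₂ + d σ₂) ^ β - (v / σ₂) ^ β - α ^ β
      < (v / σ₂ + d σ₁) ^ β - (v / σ₂) ^ β - α ^ β := by gcongr
    _ < (v / σ₁ + d σ₁) ^ β - (v / σ₁) ^ β - α ^ β := by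
        gcongr ?_ - _; exact rpow_add_sub_rpow_lt hvσ₀ hvσ (hd₂.trans hd) hβ

theorem continuousOn_rpowGap (hβ : 0 < β) : ContinuousOn (rpowGap u v α β γ) (Ioi 0) := by
  unfold rpowGap
  have := continuous_rpow_const hβ.le
  fun_prop (disch := intro σ hσ; exact (mem_Ioi.mp hσ).ne')

theorem rpowGap_pos (hv : 0 < v) (huv : v < u) (hα : 0 < α) (hβ : 1 < β) (hγ : 0 < γ) :
    0 < rpowGap u v α β γ ((u - v) / γ) := by
  have hσ : 0 < (u - v) / γ := div_pos (by linarith) hγ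
  have hsplit : u / ((u - v) / γ) + α - γ = v / ((u - v) / γ) + α := by
    field_simp [sub_ne_zero.mpr huv.ne']; ring
  have := rpow_add_rpow_lt_rpow_add (div_pos hv hσ) hα hβ
  rw [rpowGap, hsplit]
  linarith

theorem rpowGap_eq_neg (huv : v < u) :
    rpowGap u v α β γ ((u - v) / (γ - α)) = -α ^ β := by
  have hsplit : u / ((u - v) / (γ - α)) + α - γ = v / ((u - v) / (γ - α)) := by
    field_simp [sub_ne_zero.mpr huv.ne']; ring
  rw [rpowGap, hsplit]
  ring

end

/-- For `u > v > 0`, `α > 0`, `β > 1`, `γ > α`, with `σ_max = (u−v)/(γ−α)`, the function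
`f(σ) = (u/σ + α − γ)^β − (v/σ)^β − α^β` is strictly decreasing on `(0, σ_max)`;
consequently it has a unique zero in `((u−v)/γ, σ_max)`. -/
theorem f_strictAnti_unique_zero (u v α β γ : ℝ) (hv : 0 < v) (huv : v < u)
    (hα : 0 < α) (hβ : 1 < β) (hγ : α < γ) :
    StrictAntiOn (fun σ : ℝ => (u / σ + α - γ) ^ β - (v / σ) ^ β - α ^ β)
      (Set.Ioo 0 ((u - v) / (γ - α))) ∧
    (∃! σ : ℝ, σ ∈ Set.Ioo ((u - v) / γ) ((u - v) / (γ - α)) ∧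
      (u / σ + α - γ) ^ β - (v / σ) ^ β - α ^ β = 0) := by
  have hanti := rpowGap_strictAntiOn hv huv hβ hγ
  have ha : 0 < (u - v) / γ := div_pos (by linarith) (by linarith)
  have hab : (u - v) / γ ≤ (u - v) / (γ - α) :=
    div_le_div_of_nonneg_left (by linarith) (by linarith) (by linarith)
  refine ⟨hanti, hanti.existsUnique_zero hab (Ioo_subset_Ioo_left ha.le) ?_
    (rpowGap_pos hv huv hα hβ (by linarith)) ?_⟩
  · exact (continuousOn_rpowGap (by linarith)).mono fun σ hσ => ha.trans_le hσ.1
  · rw [rpowGap_eq_neg huv]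
    exact neg_neg_of_pos (rpow_pos_of_pos hα β)
end
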